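/- Let G=(V,E) be a weighted graph with boundary ∂=A⊔B⊔C and let n≥2 be an integer. Then the Boolean optimization dominates the integer program: B ≥ I. -/

import Mathlib

open scoped Classical

noncomputable section

namespace RTN

/-! ## Set partitions -/

/-- Number of blocks of a set partition (as an integer). -/
def nb {α : Type*} (p : Setoid α) : ℤ := Nat.card (Quotient p)

/-- The partition distance `d(p,q) = #(p) + #(q) - 2 #(p ⊔ q)`. -/
def pdist {α : Type*} (p q : Setoid α) : ℤ := nb p + nb q - 2 * nb (p ⊔ q)

lemma pdist_comm {α : Type*} (p q : Setoid α) : pdist p q = pdist q p := by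
  unfold pdist
  rw [sup_comm p q]
  ring

/-- `k` is a singlet (block of size one) of the partition `p`. -/
def IsSinglet {α : Type*} (p : Setoid α) (k : α) : Prop := ∀ y, p.r k y → y = k

/-- The number of singlets `#₁(p)` of a partition. -/
def nS {α : Type*} (p : Setoid α) : ℤ := Nat.card {k : α // IsSinglet p k}

/-- The singlet distance `d₁(s₁,s₂) = #₁(s₁) + #₁(s₂) - 2 #₁(s₁ ⊔ s₂)`. -/
def sdist {α : Type*} (s₁ s₂ : Setoid α) : ℤ := nS s₁ + nS s₂ - 2 * nS (s₁ ⊔ s₂)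

/-- The singlet pattern `s(p)`: the coarsest partition whose singlets are exactly
those of `p` (all non-singlet elements lie in one block). -/
def spat {α : Type*} (p : Setoid α) : Setoid α where
  r x y := x = y ∨ (¬ IsSinglet p x ∧ ¬ IsSinglet p y)
  iseqv := by
    refine ⟨fun x => Or.inl rfl, ?_, ?_⟩
    · intro x y h
      rcases h with rfl | ⟨hx, hy⟩
      · exact Or.inl rfl
      · exact Or.inr ⟨hy, hx⟩
    · intro x y z h1 h2
      rcases h1 with rfl | ⟨hx, hy⟩
      · exact h2
      · rcases h2 with rfl | ⟨_, hz⟩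
        · exact Or.inr ⟨hx, hy⟩
        · exact Or.inr ⟨hx, hz⟩

/-- The bit `b^k(p)`: `0` if `p` has a singlet at `k`, else `1`. -/
def bbit {α : Type*} (p : Setoid α) (k : α) : ℤ := if IsSinglet p k then 0 else 1

/-- The size of the block of `p` containing `x`. -/
def blockSize {α : Type*} (p : Setoid α) (x : α) : ℕ := Nat.card {y : α // p.r x y}

noncomputable instance {α : Type*} [Finite α] (s : Setoid α) : Fintype (Quotient s) :=
  Fintype.ofFinite _

/-! ## Permutations -/

/-- The partition of `α` into orbits (cycles) of a permutation. -/
def orbitSetoid {α : Type*} (g : Equiv.Perm α) : Setoid α where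
  r x y := ∃ k : ℤ, (g ^ k) x = y
  iseqv := by
    refine ⟨fun x => ⟨0, by simp⟩, ?_, ?_⟩
    · rintro x y ⟨k, rfl⟩
      exact ⟨-k, by simp [← Equiv.Perm.mul_apply, ← zpow_add]⟩
    · rintro x y z ⟨k, rfl⟩ ⟨l, rfl⟩
      exact ⟨l + k, by rw [zpow_add, Equiv.Perm.mul_apply]⟩

/-- The number of cycles `#(g)` of a permutation (fixed points included). -/
def ncyc {α : Type*} (g : Equiv.Perm α) : ℤ := nb (orbitSetoid g)

/-- The Cayley distance `d(g,h) = N - #(g h⁻¹)`. -/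
def cayley {α : Type*} [Fintype α] (g h : Equiv.Perm α) : ℤ :=
  (Fintype.card α : ℤ) - ncyc (g * h⁻¹)

lemma orbitSetoid_inv {α : Type*} (g : Equiv.Perm α) : orbitSetoid g⁻¹ = orbitSetoid g := by
  apply Setoid.ext
  intro x y
  constructor
  · rintro ⟨k, hk⟩
    exact ⟨-k, by rw [← inv_zpow']; exact hk⟩
  · rintro ⟨k, hk⟩
    exact ⟨-k, by rw [inv_zpow', neg_neg]; exact hk⟩

lemma cayley_comm {α : Type*} [Fintype α] (g h : Equiv.Perm α) : cayley g h = cayley h g := by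
  unfold cayley ncyc
  rw [show h * g⁻¹ = (g * h⁻¹)⁻¹ by rw [mul_inv_rev, inv_inv], orbitSetoid_inv]

/-- Coarse graining of a partition `p` by the blocks of `P(g₀)`: the partition of the set
of blocks of `P(g₀)` induced by `p ⊔ P(g₀)`. -/
def coarse {α : Type*} (g₀ : Equiv.Perm α) (p : Setoid α) :
    Setoid (Quotient (orbitSetoid g₀)) where
  r u v := ∃ x y : α, Quotient.mk (orbitSetoid g₀) x = u ∧ Quotient.mk (orbitSetoid g₀) y = v ∧
    (p ⊔ orbitSetoid g₀).r x y
  iseqv := by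
    refine ⟨?_, ?_, ?_⟩
    · intro u
      obtain ⟨x, rfl⟩ := Quotient.exists_rep u
      exact ⟨x, x, rfl, rfl, (p ⊔ orbitSetoid g₀).iseqv.refl x⟩
    · rintro u v ⟨x, y, hx, hy, hxy⟩
      exact ⟨y, x, hy, hx, (p ⊔ orbitSetoid g₀).iseqv.symm hxy⟩
    · rintro u v w ⟨x, y, hx, hy, hxy⟩ ⟨y', z, hy', hz, hyz⟩
      refine ⟨x, z, hx, hz, ?_⟩
      have h1 : (orbitSetoid g₀).r y y' := Quotient.exact (hy.trans hy'.symm)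
      have h2 : (p ⊔ orbitSetoid g₀).r y y' :=
        (le_sup_right : orbitSetoid g₀ ≤ p ⊔ orbitSetoid g₀) h1
      exact (p ⊔ orbitSetoid g₀).iseqv.trans hxy
        ((p ⊔ orbitSetoid g₀).iseqv.trans h2 hyz)

/-- The coarse graining `q_{g₀}(g) ∈ P_{#(g₀)}` of a permutation `g`. -/
def qc {α : Type*} (g₀ g : Equiv.Perm α) : Setoid (Quotient (orbitSetoid g₀)) :=
  coarse g₀ (orbitSetoid g)

/-! ## Standard reflected-entropy boundary elements -/

/-- `g_B`, the product of `n` disjoint `m`-cycles `(k,ℓ) ↦ (k,ℓ+1)`. -/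
def gB (n m : ℕ) : Equiv.Perm (Fin n × Fin m) :=
  Equiv.prodCongr (Equiv.refl (Fin n)) (finRotate m)

/-- `γ`, cyclically shifting `k ↦ k+1` on the elements with `ℓ` in the lower half,
fixing the rest. -/
def gamma (n m : ℕ) : Equiv.Perm (Fin n × Fin m) where
  toFun x := if m / 2 ≤ (x.2 : ℕ) then (finRotate n x.1, x.2) else x
  invFun x := if m / 2 ≤ (x.2 : ℕ) then ((finRotate n).symm x.1, x.2) else x
  left_inv := by
    intro x
    by_cases h : m / 2 ≤ (x.2 : ℕ)
    · simp only [h, if_true, Equiv.symm_apply_apply, Equiv.apply_symm_apply]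
    · simp [h]
  right_inv := by
    intro x
    by_cases h : m / 2 ≤ (x.2 : ℕ)
    · simp only [h, if_true, Equiv.symm_apply_apply, Equiv.apply_symm_apply]
    · simp [h]

/-- `g_A = γ⁻¹ g_B γ`. -/
def gA (n m : ℕ) : Equiv.Perm (Fin n × Fin m) :=
  (gamma n m)⁻¹ * gB n m * gamma n m

/-- For even `m`, `Fin m` splits into an upper and a lower half. -/
def halfEquiv (m : ℕ) (hm : m % 2 = 0) : Fin 2 × Fin (m / 2) ≃ Fin m :=
  finProdFinEquiv.trans (finCongr (by omega))

/-- `X`, the product of the `2n` disjoint `(m/2)`-cycles cyclically permuting the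
upper and the lower half of each block `k`. -/
def Xel (n m : ℕ) (hm : m % 2 = 0) : Equiv.Perm (Fin n × Fin m) :=
  Equiv.prodCongr (Equiv.refl (Fin n))
    ((halfEquiv m hm).permCongr
      (Equiv.prodCongr (Equiv.refl (Fin 2)) (finRotate (m / 2))))

/-- The set of blocks of `P(X)`; it has `2n` elements. -/
abbrev BX (n m : ℕ) (hm : m % 2 = 0) := Quotient (orbitSetoid (Xel n m hm))

/-- `q_A = q_X(g_A) ∈ P_{2n}`. -/
def qAel (n m : ℕ) (hm : m % 2 = 0) : Setoid (BX n m hm) :=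
  qc (Xel n m hm) (gA n m)

/-- `q_B = q_X(g_B) ∈ P_{2n}`. -/
def qBel (n m : ℕ) (hm : m % 2 = 0) : Setoid (BX n m hm) :=
  qc (Xel n m hm) (gB n m)

/-! ## Doubled elements (two copies) -/

/-- Two copies of the index set `{1,…,mn}`. -/
abbrev DIdx (n m : ℕ) := (Fin n × Fin m) ⊕ (Fin n × Fin m)

/-- `g̃_A = g_A ⊕ g_A`. -/
def gAt (n m : ℕ) : Equiv.Perm (DIdx n m) := Equiv.sumCongr (gA n m) (gA n m)

/-- `g̃_B = g_B ⊕ g_B`. -/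
def gBt (n m : ℕ) : Equiv.Perm (DIdx n m) := Equiv.sumCongr (gB n m) (gB n m)

/-- `X̃ = X ⊕ X`. -/
def Xt (n m : ℕ) (hm : m % 2 = 0) : Equiv.Perm (DIdx n m) :=
  Equiv.sumCongr (Xel n m hm) (Xel n m hm)

/-- The set of blocks of `P(X̃)`; it has `4n` elements. -/
abbrev BXt (n m : ℕ) (hm : m % 2 = 0) := Quotient (orbitSetoid (Xt n m hm))

/-- `q̃_A = q_{X̃}(g̃_A) ∈ P_{4n}`. -/
def qAt (n m : ℕ) (hm : m % 2 = 0) : Setoid (BXt n m hm) :=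
  qc (Xt n m hm) (gAt n m)

/-- `q̃_B = q_{X̃}(g̃_B) ∈ P_{4n}`. -/
def qBt (n m : ℕ) (hm : m % 2 = 0) : Setoid (BXt n m hm) :=
  qc (Xt n m hm) (gBt n m)

/-- A block of `P(X̃)` lies in the first copy. -/
def inCopy1 {n m : ℕ} {hm : m % 2 = 0} (u : BXt n m hm) : Prop :=
  ∃ x, Quotient.mk (orbitSetoid (Xt n m hm)) (Sum.inl x) = u

/-- `#₁⁽¹⁾(q)`: the number of singlets of `q` among the first-copy positions. -/
def nS1 {n m : ℕ} {hm : m % 2 = 0} (q : Setoid (BXt n m hm)) : ℤ :=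
  Nat.card {u : BXt n m hm // IsSinglet q u ∧ inCopy1 u}

/-- `#₁⁽²⁾(q)`: the number of singlets of `q` among the second-copy positions. -/
def nS2 {n m : ℕ} {hm : m % 2 = 0} (q : Setoid (BXt n m hm)) : ℤ :=
  Nat.card {u : BXt n m hm // IsSinglet q u ∧ ¬ inCopy1 u}

/-- `τ ∈ P_{4n}`, the two-block partition separating the two copies. -/
def tau (n m : ℕ) (hm : m % 2 = 0) : Setoid (BXt n m hm) where
  r u v := inCopy1 u ↔ inCopy1 v
  iseqv := ⟨fun _ => Iff.rfl, Iff.symm, Iff.trans⟩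

/-! ## Graphs, cuts and optimization programs -/

variable {V : Type*}

/-- Sum of an edge function along (the edge list of) a walk, with multiplicity. -/
def wkSum {β : Type*} [AddCommMonoid β] {G : SimpleGraph V} {x y : V}
    (f : Sym2 V → β) (L : G.Walk x y) : β :=
  (L.edges.map f).sum

variable [Fintype V]

/-- Sum of an edge weight function over a set of edges. -/
def wsum (f : Sym2 V → ℝ) (S : Set (Sym2 V)) : ℝ :=
  ∑ e ∈ Finset.univ.filter (· ∈ S), f e

/-- The cut surface `μ(r)`: edges of `G` with one endpoint in `r`, the other outside. -/
def mu (G : SimpleGraph V) (r : Set V) : Set (Sym2 V) :=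
  {e | e ∈ G.edgeSet ∧ ∃ x y, e = s(x, y) ∧ x ∈ r ∧ y ∉ r}

/-- `μ(r₁:r₂)`: edges of `G` with an endpoint in `r₁` and an endpoint in `r₂`. -/
def mu2 (G : SimpleGraph V) (r₁ r₂ : Set V) : Set (Sym2 V) :=
  {e | e ∈ G.edgeSet ∧ ∃ x y, e = s(x, y) ∧ x ∈ r₁ ∧ y ∈ r₂}

/-- `r` is a cut for `X : Y`. -/
def IsCut (X Y r : Set V) : Prop := X ⊆ r ∧ Y ⊆ rᶜ

/-- The minimal cut area `𝒜(X:Y)`. -/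
def minCut (G : SimpleGraph V) (w : Sym2 V → ℝ) (X Y : Set V) : ℝ :=
  sInf {a | ∃ r : Set V, IsCut X Y r ∧ a = wsum w (mu G r)}

/-- `(α,β,γ)` is a triway cut for `(A,B,C)`. -/
def IsTriway (A B C α β γ : Set V) : Prop :=
  α ∪ β ∪ γ = Set.univ ∧ Disjoint α β ∧ Disjoint β γ ∧ Disjoint α γ ∧
    A ⊆ α ∧ B ⊆ β ∧ C ⊆ γ

/-- The area of a triway cut with tensions `(t_{A:B}, t_{B:C}, t_{C:A})`. -/
def triArea (G : SimpleGraph V) (w : Sym2 V → ℝ) (tAB tBC tCA : ℝ)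
    (α β γ : Set V) : ℝ :=
  tAB * wsum w (mu2 G α β) + tBC * wsum w (mu2 G β γ) + tCA * wsum w (mu2 G γ α)

/-- The minimal triway cut area `𝒜_t(A:B:C)`. -/
def triCut (G : SimpleGraph V) (w : Sym2 V → ℝ) (tAB tBC tCA : ℝ)
    (A B C : Set V) : ℝ :=
  sInf {a | ∃ α β γ : Set V, IsTriway A B C α β γ ∧ a = triArea G w tAB tBC tCA α β γ}

/-- Boundary data: `∂ = A ⊔ B ⊔ C` (pairwise disjoint). -/
def Bdy (A B C : Set V) : Prop := Disjoint A B ∧ Disjoint A C ∧ Disjoint B C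

/-! ### The permutation optimization `R` -/

/-- The symmetric edge function induced by the Cayley distance of a vertex
configuration of permutations. -/
def permE {ι : Type*} [Fintype ι] (g : V → Equiv.Perm ι) : Sym2 V → ℝ :=
  Sym2.lift ⟨fun x y => (cayley (g x) (g y) : ℝ),
    fun x y => congrArg Int.cast (cayley_comm (g x) (g y))⟩

/-- The free energy `R(g) = Σ_e w(e) d(g(x),g(y))`. -/
def Renergy {ι : Type*} [Fintype ι] (G : SimpleGraph V) (w : Sym2 V → ℝ)
    (g : V → Equiv.Perm ι) : ℝ :=
  wsum (fun e => w e * permE g e) G.edgeSet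

/-- The optimal value `R` of the permutation optimization. -/
def Rval {ι : Type*} [Fintype ι] (G : SimpleGraph V) (w : Sym2 V → ℝ)
    (A B C : Set V) (g₁ g₂ : Equiv.Perm ι) : ℝ :=
  sInf {a | ∃ g : V → Equiv.Perm ι,
    (∀ v ∈ A, g v = g₁) ∧ (∀ v ∈ B, g v = g₂) ∧ (∀ v ∈ C, g v = 1) ∧
    a = Renergy G w g}

/-! ### The set-partition optimization `Q` -/

/-- The symmetric integer edge function induced by the partition distance of a vertex
configuration of partitions. -/
def partEZ {κ : Type*} (q : V → Setoid κ) : Sym2 V → ℤ :=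
  Sym2.lift ⟨fun x y => pdist (q x) (q y), fun x y => pdist_comm (q x) (q y)⟩

/-- The free energy `Q(q) = Σ_e w(e) d(q(x),q(y))`. -/
def Qenergy {κ : Type*} (G : SimpleGraph V) (w : Sym2 V → ℝ)
    (q : V → Setoid κ) : ℝ :=
  wsum (fun e => w e * (partEZ q e : ℝ)) G.edgeSet

/-- The optimal value `Q` of the set-partition optimization. -/
def Qval {κ : Type*} (G : SimpleGraph V) (w : Sym2 V → ℝ)
    (A B C : Set V) (q₁ q₂ : Setoid κ) : ℝ :=
  sInf {a | ∃ q : V → Setoid κ,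
    (∀ v ∈ A, q v = q₁) ∧ (∀ v ∈ B, q v = q₂) ∧ (∀ v ∈ C, q v = ⊥) ∧
    a = Qenergy G w q}

/-! ### The Boolean optimization `B` -/

/-- The Hamming distance between two bit strings. -/
def ham {κ : Type*} [Fintype κ] (b₁ b₂ : κ → Bool) : ℤ :=
  ∑ k : κ, if b₁ k = b₂ k then 0 else 1

/-- The bit string `b(q)` of a partition: `false` exactly at singlets. -/
def bvec {κ : Type*} (p : Setoid κ) : κ → Bool :=
  fun u => if IsSinglet p u then false else true

/-- Feasibility of `r` for the Boolean program at configuration `b`. -/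
def Bfeas {κ : Type*} [Fintype κ] (G : SimpleGraph V) (A B : Set V) (n : ℕ)
    (b : V → κ → Bool) (r : Sym2 V → ℕ) : Prop :=
  (∀ x ∈ A, ∀ y ∈ B, ∀ L : G.Walk x y,
    2 ∣ wkSum (fun e => (r e : ℤ)) L ∧
    wkSum (fun e => (r e : ℤ)) L ≥
      2 * ((n : ℤ) - if ∀ v ∈ L.support, ∀ k, b v k = true then 1 else 0)) ∧
  (∀ x y : V, G.Adj x y → (r s(x, y) : ℤ) ≥ ⌈(ham (b x) (b y) : ℚ) / 2⌉)

/-- The inner Boolean optimum `B(b)` at a fixed Boolean configuration `b`. -/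
def BvalAt {κ : Type*} [Fintype κ] (G : SimpleGraph V) (w : Sym2 V → ℝ)
    (A B : Set V) (n : ℕ) (b : V → κ → Bool) : ℝ :=
  sInf {a | ∃ r : Sym2 V → ℕ, Bfeas G A B n b r ∧
    a = wsum (fun e => w e * (r e : ℝ)) G.edgeSet}

/-- The optimal value `B` of the Boolean optimization. -/
def Bval (κ : Type*) [Fintype κ] (G : SimpleGraph V) (w : Sym2 V → ℝ)
    (A B C : Set V) (n : ℕ) : ℝ :=
  sInf {a | ∃ b : V → κ → Bool,
    (∀ v ∈ A ∪ B, ∀ k, b v k = true) ∧ (∀ v ∈ C, ∀ k, b v k = false) ∧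
    ∃ r : Sym2 V → ℕ, Bfeas G A B n b r ∧
      a = wsum (fun e => w e * (r e : ℝ)) G.edgeSet}

/-! ### The integer program `I` -/

/-- Feasibility of `(ρ,σ)` for the integer program. -/
def IPfeas (G : SimpleGraph V) (A B C : Set V) (n : ℕ) (ρ σ : Sym2 V → ℕ) : Prop :=
  (∀ x ∈ A, ∀ y ∈ B, ∀ L : G.Walk x y,
    2 ∣ wkSum (fun e => (σ e : ℤ) + (ρ e : ℤ)) L ∧
    wkSum (fun e => (σ e : ℤ) + (ρ e : ℤ)) L ≥
      2 * ((n : ℤ) - if wkSum (fun e => (ρ e : ℤ)) L = 0 then 1 else 0)) ∧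
  (∀ x ∈ A ∪ B, ∀ y ∈ C, ∀ L : G.Walk x y,
    wkSum (fun e => (ρ e : ℤ)) L ≥ (n : ℤ))

/-- The objective of the integer program. -/
def IPobj (G : SimpleGraph V) (w : Sym2 V → ℝ) (ρ σ : Sym2 V → ℕ) : ℝ :=
  wsum (fun e => w e * ((σ e : ℝ) + (ρ e : ℝ))) G.edgeSet

/-- The optimal value `I` of the integer program. -/
def Ival (G : SimpleGraph V) (w : Sym2 V → ℝ) (A B C : Set V) (n : ℕ) : ℝ :=
  sInf {a | ∃ ρ σ : Sym2 V → ℕ, IPfeas G A B C n ρ σ ∧ a = IPobj G w ρ σ}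

/-! ### The ℓ-intersecting cut problem `M` -/

/-- Feasibility for the `ℓ`-intersecting cut problem with boundary sets
`Γ₀, …, Γ_ℓ` and `C`, for a half-integer valued `ϱ`. -/
def Mfeas (G : SimpleGraph V) (Γ : ℕ → Set V) (ℓ : ℕ) (C : Set V)
    (ϱ : Sym2 V → ℚ) : Prop :=
  (∀ e, ∃ j : ℕ, ϱ e = (j : ℚ) / 2) ∧
  (∀ k k' : ℕ, k ≤ ℓ → k' ≤ ℓ → ∀ x ∈ Γ k, ∀ y ∈ Γ k', ∀ L : G.Walk x y,
    ∃ j : ℕ, wkSum ϱ L = |(k : ℚ) - (k' : ℚ)| + (j : ℚ)) ∧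
  (∀ k : ℕ, k ≤ ℓ → ∀ x ∈ Γ k, ∀ y ∈ C, ∀ L : G.Walk x y,
    ∃ j : ℕ, wkSum ϱ L = (ℓ : ℚ) / 2 + (j : ℚ))

/-- The objective of the `ℓ`-intersecting cut problem. -/
def Mobj (G : SimpleGraph V) (w : Sym2 V → ℝ) (ϱ : Sym2 V → ℚ) : ℝ :=
  wsum (fun e => w e * (ϱ e : ℝ)) G.edgeSet

/-- The optimal value `M` of the `ℓ`-intersecting cut problem. -/
def Mval (G : SimpleGraph V) (w : Sym2 V → ℝ) (Γ : ℕ → Set V) (ℓ : ℕ)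
    (C : Set V) : ℝ :=
  sInf {a | ∃ ϱ : Sym2 V → ℚ, Mfeas G Γ ℓ C ϱ ∧ a = Mobj G w ϱ}

/-- The complementary reduced graph `G^c`: the edges of `G` not lying entirely
inside `V'`. -/
def reducedGraph (G : SimpleGraph V) (V' : Set V) : SimpleGraph V where
  Adj x y := G.Adj x y ∧ ¬ (x ∈ V' ∧ y ∈ V')
  symm := by
    constructor
    intro x y h
    exact ⟨h.1.symm, fun hc => h.2 ⟨hc.2, hc.1⟩⟩
  loopless := by
    constructor
    intro x h
    exact G.loopless.irrefl x h.1

end RTN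

/-!
A Boolean-feasible pair `(b, r)` yields an IP-feasible pair of the same weight: take
`ρ(e) = ⌈d(b(x),b(y))/2⌉`, which the edge constraint puts below `r`, and `σ = r - ρ`.
Along a path from `A ∪ B` (where `b ≡ 1`) to `C` (where `b ≡ 0`) the triangle inequality for
the Hamming distance gives `2ρ(L) ≥ 2n`. On an `A`–`B` path with `ρ(L) ≠ 0` the string `b` is
not constantly `1`, so the Boolean program already demands `r(L) ≥ 2n`.
-/

namespace RTN

section Hamming

variable {κ : Type*} [Fintype κ]

lemma ham_eq_hammingDist (b₁ b₂ : κ → Bool) : ham b₁ b₂ = hammingDist b₁ b₂ := by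
  simp [ham, hammingDist, Finset.card_filter, ite_not]

lemma hammingDist_eq_card_of_forall_ne {b₁ b₂ : κ → Bool} (h : ∀ k, b₁ k ≠ b₂ k) :
    hammingDist b₁ b₂ = Fintype.card κ := by
  simp [hammingDist, h]

end Hamming

section Walks

variable {V : Type*} {G : SimpleGraph V} {x y : V}

lemma wkSum_natCast (f : Sym2 V → ℕ) (L : G.Walk x y) :
    wkSum (fun e => (f e : ℤ)) L = wkSum f L := by
  simp [wkSum, Nat.cast_list_sum, List.map_map, Function.comp_def]

lemma wkSum_congr {β : Type*} [AddCommMonoid β] {f g : Sym2 V → β} (L : G.Walk x y)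
    (h : ∀ e ∈ L.edges, f e = g e) : wkSum f L = wkSum g L :=
  congrArg List.sum (List.map_congr_left h)

lemma wkSum_const {β : Type*} [AddCommMonoid β] (c : β) (L : G.Walk x y) :
    wkSum (fun _ => c) L = L.length • c := by
  simp [wkSum, List.map_const']

end Walks

variable {V κ : Type*} [Fintype κ]

def edgeBound (b : V → κ → Bool) : Sym2 V → ℕ :=
  Sym2.lift ⟨fun x y => ⌈(hammingDist (b x) (b y) : ℚ) / 2⌉₊,
    fun x y => by dsimp only; rw [hammingDist_comm]⟩

@[simp]
lemma edgeBound_mk (b : V → κ → Bool) (x y : V) :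
    edgeBound b s(x, y) = ⌈(hammingDist (b x) (b y) : ℚ) / 2⌉₊ :=
  rfl

lemma hammingDist_le_two_mul_edgeBound (b : V → κ → Bool) (x y : V) :
    hammingDist (b x) (b y) ≤ 2 * edgeBound b s(x, y) := by
  have := Nat.le_ceil ((hammingDist (b x) (b y) : ℚ) / 2)
  rw [edgeBound_mk]
  exact_mod_cast (by linarith :
    (hammingDist (b x) (b y) : ℚ) ≤ 2 * ⌈(hammingDist (b x) (b y) : ℚ) / 2⌉₊)

lemma hammingDist_le_two_mul_wkSum_edgeBound {G : SimpleGraph V} (b : V → κ → Bool) :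
    ∀ {x y : V} (L : G.Walk x y), hammingDist (b x) (b y) ≤ 2 * wkSum (edgeBound b) L
  | _, _, .nil => by simp
  | x, z, .cons (v := y) _ L => by
    have hxy := hammingDist_le_two_mul_edgeBound b x y
    have hyz := hammingDist_le_two_mul_wkSum_edgeBound b L
    have := hammingDist_triangle (b x) (b y) (b z)
    simp only [wkSum, SimpleGraph.Walk.edges_cons, List.map_cons, List.sum_cons] at hyz ⊢
    omega

lemma wkSum_edgeBound_eq_zero {G : SimpleGraph V} {b : V → κ → Bool} {c : κ → Bool} {x y : V}
    (L : G.Walk x y) (hc : ∀ v ∈ L.support, b v = c) : wkSum (edgeBound b) L = 0 := by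
  refine List.sum_eq_zero fun d hd => ?_
  obtain ⟨e, he, rfl⟩ := List.mem_map.1 hd
  induction e using Sym2.ind with
  | _ u v =>
    simp [hc u (L.fst_mem_support_of_mem_edges he),
      hc v (L.snd_mem_support_of_mem_edges he)]

variable [Fintype V]

lemma edgeBound_le_of_Bfeas {G : SimpleGraph V} {A B : Set V} {n : ℕ} {b : V → κ → Bool}
    {r : Sym2 V → ℕ} (hr : Bfeas G A B n b r) {e : Sym2 V} (he : e ∈ G.edgeSet) :
    edgeBound b e ≤ r e := by
  induction e using Sym2.ind with
  | _ x y =>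
    have hxy := hr.2 x y he
    rw [ham_eq_hammingDist, ← Int.natCast_ceil_eq_ceil (by positivity)] at hxy
    exact Int.ofNat_le.mp hxy

variable {G : SimpleGraph V} {A B C : Set V} {n : ℕ}

lemma Bfeas_const (hAB : Disjoint A B) (hκ : Fintype.card κ ≤ 2 * n) (b : V → κ → Bool) :
    Bfeas G A B n b (fun _ => 2 * n) := by
  refine ⟨fun x hx y hy L => ?_, fun x y _ => ?_⟩
  · have hlen : 1 ≤ L.length := Nat.one_le_iff_ne_zero.2 fun h =>
      Set.disjoint_left.1 hAB hx (L.eq_of_length_eq_zero h ▸ hy)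
    rw [wkSum_const, nsmul_eq_mul]
    refine ⟨⟨n * L.length, by push_cast; ring⟩, ?_⟩
    have : (1 : ℤ) ≤ L.length := by exact_mod_cast hlen
    split_ifs <;> push_cast <;> nlinarith
  · rw [ham_eq_hammingDist, ← Int.natCast_ceil_eq_ceil (by positivity), ge_iff_le, Nat.cast_le,
      Nat.ceil_le]
    have : (hammingDist (b x) (b y) : ℚ) ≤ 2 * n := by
      exact_mod_cast hammingDist_le_card_fintype.trans hκ
    push_cast
    linarith [(Nat.cast_nonneg _ : (0 : ℚ) ≤ hammingDist (b x) (b y))]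

lemma IPfeas_of_Bfeas {b : V → κ → Bool} (hbAB : ∀ v ∈ A ∪ B, ∀ k, b v k = true)
    (hbC : ∀ v ∈ C, ∀ k, b v k = false) (hκ : Fintype.card κ = 2 * n) {r : Sym2 V → ℕ}
    (hr : Bfeas G A B n b r) :
    IPfeas G A B C n (edgeBound b) (fun e => r e - edgeBound b e) := by
  refine ⟨fun x hx y hy L => ?_, fun x hx y hy L => ?_⟩
  · have hsum : wkSum (fun e => ((r e - edgeBound b e : ℕ) : ℤ) + (edgeBound b e : ℤ)) L =
        wkSum (fun e => (r e : ℤ)) L := wkSum_congr L fun e he => by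
      have := edgeBound_le_of_Bfeas hr (L.edges_subset_edgeSet he)
      omega
    have hρ : (∀ v ∈ L.support, ∀ k, b v k = true) →
        wkSum (fun e => (edgeBound b e : ℤ)) L = 0 := fun h => by
      rw [wkSum_natCast, wkSum_edgeBound_eq_zero L (c := fun _ => true) fun v hv => funext (h v hv)]
      rfl
    obtain ⟨hpar, hge⟩ := hr.1 x hx y hy L
    rw [hsum]
    refine ⟨hpar, le_trans ?_ hge⟩
    split_ifs <;> simp_all
  · have hd : hammingDist (b x) (b y) = 2 * n := by
      rw [hammingDist_eq_card_of_forall_ne fun k => by simp [hbAB x hx k, hbC y hy k], hκ]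
    have := hammingDist_le_two_mul_wkSum_edgeBound b L
    rw [wkSum_natCast]
    omega

lemma IPobj_edgeBound {b : V → κ → Bool} {r : Sym2 V → ℕ} (hr : Bfeas G A B n b r)
    (w : Sym2 V → ℝ) :
    IPobj G w (edgeBound b) (fun e => r e - edgeBound b e) =
      wsum (fun e => w e * r e) G.edgeSet :=
  Finset.sum_congr rfl fun e he => by
    dsimp only
    rw [← Nat.cast_add, Nat.sub_add_cancel (edgeBound_le_of_Bfeas hr (by simpa using he))]

lemma Ival_le_IPobj {w : Sym2 V → ℝ} (hw : ∀ e, 0 ≤ w e) {ρ σ : Sym2 V → ℕ}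
    (h : IPfeas G A B C n ρ σ) : Ival G w A B C n ≤ IPobj G w ρ σ :=
  csInf_le ⟨0, by
    rintro a ⟨ρ, σ, -, rfl⟩
    exact Finset.sum_nonneg fun e _ => mul_nonneg (hw e) (by positivity)⟩ ⟨ρ, σ, h, rfl⟩

end RTN

theorem B_ge_I_general {V : Type*} [Fintype V] (G : SimpleGraph V)
    (w : Sym2 V → ℝ) (hw : ∀ e, 0 ≤ w e) (A B C : Set V) (hbdy : RTN.Bdy A B C)
    {n : ℕ} :
    RTN.Bval (Fin (2 * n)) G w A B C n ≥ RTN.Ival G w A B C n := by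
  obtain ⟨hAB, hAC, hBC⟩ := hbdy
  refine le_csInf ⟨_, fun v _ => decide (v ∉ C), fun v hv _ => ?_, fun v hv _ => by simp [hv], _,
    RTN.Bfeas_const hAB (Fintype.card_fin _).le _, rfl⟩ ?_
  · rcases hv with hv | hv
    · simpa using Set.disjoint_left.1 hAC hv
    · simpa using Set.disjoint_left.1 hBC hv
  · rintro _ ⟨b, hbAB, hbC, r, hr, rfl⟩
    rw [← RTN.IPobj_edgeBound hr]
    exact RTN.Ival_le_IPobj hw (RTN.IPfeas_of_Bfeas hbAB hbC (Fintype.card_fin _) hr)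

/-- The Boolean optimization dominates the integer program: `B ≥ I`. -/
theorem B_ge_I {V : Type*} [Fintype V] (G : SimpleGraph V)
    (w : Sym2 V → ℝ) (hw : ∀ e, 0 ≤ w e) (A B C : Set V) (hbdy : RTN.Bdy A B C)
    {n : ℕ} (hn : 2 ≤ n) :
    RTN.Bval (Fin (2 * n)) G w A B C n ≥ RTN.Ival G w A B C n :=
  B_ge_I_general G w hw A B C hbdy
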